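/- arXiv:1810.10200 — 2 statements merged into one kernel-verified Lean document; each statement's English description precedes it below -/
import Mathlib

section
/- Suppose the weights a¹,…,a^{m+1}, b₁,…,b_n are all positive integers and b_j ≥ a^σ for every j ∈ {1,…,n} and every σ ∈ {1,…,m+1}. Let F = (f¹,…,f^r) be a finite family of elements of ℂ[x|θ], each of which is even, homogeneous of some weight, and irreducible. If F is homogeneously non-reduced (i.e., some f^α does not lie in ℂ[x]), then F is homogeneously non-split: there exists no ℂ-algebra automorphism φ of ℂ[x|θ] satisfying conditions (i), (ii) and (iii) of a homogeneous splitting. (This is the statement that any homogeneously non-reduced subvariety of a positive weighted projective superspace ℙ^{m|n}_ℂ(a|b) with b_j ≥ a^σ is homogeneously non-split.) -/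
open scoped TensorProduct

noncomputable section

/-- The superalgebra ℂ[x|θ] = ℂ[x¹,…,x^m] ⊗ ⋀(θ₁,…,θ_n). -/
abbrev SuperAlg (m n : ℕ) : Type :=
  MvPolynomial (Fin m) ℂ ⊗[ℂ] ExteriorAlgebra ℂ (Fin n → ℂ)

/-- The even coordinate x^μ. -/
def xVar (m n : ℕ) (μ : Fin m) : SuperAlg m n :=
  (MvPolynomial.X μ) ⊗ₜ[ℂ] 1

/-- The odd coordinate θ_j. -/
def thetaVar (m n : ℕ) (j : Fin n) : SuperAlg m n :=
  1 ⊗ₜ[ℂ] ExteriorAlgebra.ι ℂ (Pi.single j 1)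

/-- The ordered product θ_{i₁}⋯θ_{i_k}, i₁ < ⋯ < i_k, over a finset of indices. -/
def thetaProd (m n : ℕ) (s : Finset (Fin n)) : SuperAlg m n :=
  ((s.sort (· ≤ ·)).map (thetaVar m n)).prod

/-- The basis monomial x^α · θ_{i₁}⋯θ_{i_k}. -/
def smonomial (m n : ℕ) (α : Fin m →₀ ℕ) (s : Finset (Fin n)) : SuperAlg m n :=
  ((MvPolynomial.monomial α (1 : ℂ)) ⊗ₜ[ℂ] 1) * thetaProd m n s

/-- The weight of the monomial x^α·θ_{i₁}⋯θ_{i_k}: Σ_μ α_μ a^μ + Σ_{j ∈ s} b_j. -/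
def monWeight (m n : ℕ) (a : Fin m → ℤ) (b : Fin n → ℤ)
    (α : Fin m →₀ ℕ) (s : Finset (Fin n)) : ℤ :=
  (α.sum fun μ k => (k : ℤ) * a μ) + ∑ j ∈ s, b j

/-- An element of ℂ[x|θ] is homogeneous of weight d if it is a ℂ-linear combination of
monomials of weight d. -/
def IsHomogOfWeight (m n : ℕ) (a : Fin m → ℤ) (b : Fin n → ℤ) (d : ℤ)
    (f : SuperAlg m n) : Prop :=
  f ∈ Submodule.span ℂ
    {g | ∃ α s, monWeight m n a b α s = d ∧ g = smonomial m n α s}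

/-- An element of ℂ[x|θ] is even if it is a ℂ-linear combination of monomials with an even
number of θ-factors. -/
def IsEvenElem (m n : ℕ) (f : SuperAlg m n) : Prop :=
  f ∈ Submodule.span ℂ {g | ∃ α s, Even s.card ∧ g = smonomial m n α s}

/-- An element of ℂ[x|θ] is odd if it is a ℂ-linear combination of monomials with an odd
number of θ-factors. -/
def IsOddElem (m n : ℕ) (f : SuperAlg m n) : Prop :=
  f ∈ Submodule.span ℂ {g | ∃ α s, Odd s.card ∧ g = smonomial m n α s}

/-- The subalgebra ℂ[x] ⊂ ℂ[x|θ] of elements involving no θ's. -/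
def polySub (m n : ℕ) : Subalgebra ℂ (SuperAlg m n) :=
  (Algebra.TensorProduct.includeLeft :
    MvPolynomial (Fin m) ℂ →ₐ[ℂ] SuperAlg m n).range

/-- The map f ↦ f(x|0), the ℂ-algebra map ℂ[x|θ] → ℂ[x] fixing each x^μ and sending each θ_j
to 0. -/
def bodyMap (m n : ℕ) : SuperAlg m n →ₐ[ℂ] MvPolynomial (Fin m) ℂ :=
  Algebra.TensorProduct.lift (AlgHom.id ℂ _)
    ((Algebra.ofId ℂ _).comp ExteriorAlgebra.algebraMapInv)
    (fun _ _ => Commute.all _ _)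

/-- The fermionic ideal J, the two-sided ideal generated by θ₁,…,θ_n. -/
def fermIdeal (m n : ℕ) : TwoSidedIdeal (SuperAlg m n) :=
  TwoSidedIdeal.span (Set.range (thetaVar m n))

/-- The ideal J², the two-sided ideal generated by products of pairs of elements of J. -/
def fermIdealSq (m n : ℕ) : TwoSidedIdeal (SuperAlg m n) :=
  TwoSidedIdeal.span {z | ∃ u ∈ fermIdeal m n, ∃ v ∈ fermIdeal m n, z = u * v}

end


noncomputable section Aux

open Algebra.TensorProduct TrivSqZeroExt

/-- The map to `ℂ[x] ⊗ TrivSqZeroExt`-less target: evaluate x at 0, send exterior algebra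
to the trivial square-zero extension. -/
def extToTsze (n : ℕ) : ExteriorAlgebra ℂ (Fin n → ℂ) →ₐ[ℂ] TrivSqZeroExt ℂ (Fin n → ℂ) :=
  ExteriorAlgebra.lift ℂ ⟨TrivSqZeroExt.inrHom ℂ _, fun v => TrivSqZeroExt.inr_mul_inr ℂ v v⟩

def Rmap (m n : ℕ) : SuperAlg m n →ₐ[ℂ] TrivSqZeroExt ℂ (Fin n → ℂ) :=
  Algebra.TensorProduct.lift ((MvPolynomial.aeval fun _ => (0 : TrivSqZeroExt ℂ (Fin n → ℂ))))
    (extToTsze n) (fun _ _ => Commute.all _ _)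

lemma Rmap_thetaVar (m n : ℕ) (j : Fin n) :
    Rmap m n (thetaVar m n j) = TrivSqZeroExt.inr (Pi.single j 1) := by
  simp [Rmap, thetaVar, Algebra.TensorProduct.lift_tmul, extToTsze]
  exact ExteriorAlgebra.lift_ι_apply ..

lemma bodyMap_tmul (m n : ℕ) (p : MvPolynomial (Fin m) ℂ) (w : ExteriorAlgebra ℂ (Fin n → ℂ)) :
    bodyMap m n (p ⊗ₜ[ℂ] w) =
      ExteriorAlgebra.algebraMapInv w • p := by
  simp [bodyMap, Algebra.TensorProduct.lift_tmul, Algebra.ofId_apply, Algebra.smul_def,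
    mul_comm]

lemma bodyMap_includeLeft (m n : ℕ) (p : MvPolynomial (Fin m) ℂ) :
    bodyMap m n ((Algebra.TensorProduct.includeLeft :
      MvPolynomial (Fin m) ℂ →ₐ[ℂ] SuperAlg m n) p) = p := by
  simp [Algebra.TensorProduct.includeLeft_apply, bodyMap_tmul]

lemma bodyMap_thetaVar (m n : ℕ) (j : Fin n) : bodyMap m n (thetaVar m n j) = 0 := by
  simp [thetaVar, bodyMap, Algebra.TensorProduct.lift_tmul, ExteriorAlgebra.algebraMapInv]

lemma bodyMap_xVar (m n : ℕ) (μ : Fin m) : bodyMap m n (xVar m n μ) = MvPolynomial.X μ := by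
  simp [xVar, bodyMap, Algebra.TensorProduct.lift_tmul]

/-- Extensionality for algebra maps out of `SuperAlg`. -/
lemma superAlgHom_ext {m n : ℕ} {A : Type*} [Semiring A] [Algebra ℂ A]
    {f g : SuperAlg m n →ₐ[ℂ] A}
    (hx : ∀ μ, f (xVar m n μ) = g (xVar m n μ))
    (hθ : ∀ j, f (thetaVar m n j) = g (thetaVar m n j)) : f = g := by
  apply Algebra.TensorProduct.ext
  · exact MvPolynomial.algHom_ext fun μ => by
      simpa [Algebra.TensorProduct.includeLeft_apply, xVar] using hx μ
  · apply ExteriorAlgebra.hom_ext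
    apply LinearMap.pi_ext
    intro j c
    have h1 : (Pi.single j c : Fin n → ℂ) = c • (Pi.single j 1 : Fin n → ℂ) := by
      rw [← Pi.single_smul, smul_eq_mul, mul_one]
    simp only [LinearMap.coe_comp, Function.comp_apply, AlgHom.toLinearMap_apply,
      AlgHom.coe_restrictScalars', AlgHom.coe_comp, h1, map_smul]
    have := hθ j
    simp only [thetaVar] at this
    simpa [Algebra.TensorProduct.includeRight_apply] using congrArg (c • ·) this

lemma span_sub {R : Type*} [Ring R] {s : Set R} {K : TwoSidedIdeal R} (h : s ⊆ K) :
    ∀ x ∈ TwoSidedIdeal.span s, x ∈ K := fun _ hx => TwoSidedIdeal.mem_span_iff.mp hx K h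

lemma fermIdeal_le_kerBody (m n : ℕ) :
    ∀ x ∈ fermIdeal m n, x ∈ TwoSidedIdeal.ker (bodyMap m n) := by
  apply span_sub
  rintro _ ⟨j, rfl⟩
  exact (TwoSidedIdeal.mem_ker _).mpr (bodyMap_thetaVar m n j)

lemma fermIdealSq_le_kerBody (m n : ℕ) :
    ∀ x ∈ fermIdealSq m n, x ∈ TwoSidedIdeal.ker (bodyMap m n) := by
  apply span_sub
  rintro _ ⟨u, hu, v, hv, rfl⟩
  have hu' := (TwoSidedIdeal.mem_ker _).mp (fermIdeal_le_kerBody m n u hu)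
  exact (TwoSidedIdeal.mem_ker _).mpr (by rw [map_mul, hu', zero_mul])

lemma fermIdeal_fst_zero (m n : ℕ) :
    ∀ x ∈ fermIdeal m n, (Rmap m n x).fst = 0 := by
  have : ∀ x ∈ fermIdeal m n,
      x ∈ TwoSidedIdeal.ker ((TrivSqZeroExt.fstHom ℂ ℂ (Fin n → ℂ)).comp (Rmap m n)) := by
    apply span_sub
    rintro _ ⟨j, rfl⟩
    exact (TwoSidedIdeal.mem_ker _).mpr (by simp [Rmap_thetaVar])
  exact fun x hx => (TwoSidedIdeal.mem_ker _).mp (this x hx)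

lemma fermIdealSq_le_kerR (m n : ℕ) :
    ∀ x ∈ fermIdealSq m n, Rmap m n x = 0 := by
  have : ∀ x ∈ fermIdealSq m n, x ∈ TwoSidedIdeal.ker (Rmap m n) := by
    apply span_sub
    rintro _ ⟨u, hu, v, hv, rfl⟩
    refine (TwoSidedIdeal.mem_ker _).mpr ?_
    have hu' := fermIdeal_fst_zero m n u hu
    have hv' := fermIdeal_fst_zero m n v hv
    have eu : Rmap m n u = TrivSqZeroExt.inr (Rmap m n u).snd := by
      conv_lhs => rw [← TrivSqZeroExt.inl_fst_add_inr_snd_eq (Rmap m n u)]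
      rw [hu']; simp
    have ev : Rmap m n v = TrivSqZeroExt.inr (Rmap m n v).snd := by
      conv_lhs => rw [← TrivSqZeroExt.inl_fst_add_inr_snd_eq (Rmap m n v)]
      rw [hv']; simp
    rw [map_mul, eu, ev, TrivSqZeroExt.inr_mul_inr]
  exact fun x hx => (TwoSidedIdeal.mem_ker _).mp (this x hx)

lemma smonomial_empty (m n : ℕ) (α : Fin m →₀ ℕ) :
    smonomial m n α ∅ = (MvPolynomial.monomial α (1 : ℂ)) ⊗ₜ[ℂ] 1 := by
  simp [smonomial, thetaProd]

lemma smonomial_single (m n : ℕ) (j : Fin n) :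
    smonomial m n 0 {j} = thetaVar m n j := by
  have : ({j} : Finset (Fin n)).sort (· ≤ ·) = [j] := Finset.sort_singleton _ j
  simp only [smonomial, thetaProd, this, List.map_cons, List.map_nil, List.prod_cons,
    List.prod_nil, MvPolynomial.monomial_zero', map_one]
  rw [← Algebra.TensorProduct.one_def, one_mul, mul_one]

lemma xVar_homog (m n : ℕ) (a : Fin m → ℤ) (b : Fin n → ℤ) (μ : Fin m) :
    IsHomogOfWeight m n a b (a μ) (xVar m n μ) := by
  apply Submodule.subset_span
  refine ⟨Finsupp.single μ 1, ∅, ?_, ?_⟩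
  · simp [monWeight, Finsupp.sum_single_index]
  · rw [smonomial_empty]
    simp [xVar, MvPolynomial.X]

/-- The key vanishing lemma: a homogeneous element of weight `a μ` lying in `J²` is zero. -/
lemma key_vanish (m n : ℕ) (a : Fin (m + 1) → ℤ) (b : Fin n → ℤ)
    (ha : ∀ σ, 0 < a σ) (hba : ∀ (j : Fin n) (σ : Fin (m + 1)), a σ ≤ b j)
    (μ : Fin (m + 1)) (g : SuperAlg (m + 1) n)
    (hg : IsHomogOfWeight (m + 1) n a b (a μ) g) (hg2 : g ∈ fermIdealSq (m + 1) n) :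
    g = 0 := by
  set P : Submodule ℂ (SuperAlg (m + 1) n) := Subalgebra.toSubmodule (polySub (m + 1) n)
  set T : Submodule ℂ (SuperAlg (m + 1) n) :=
    Submodule.span ℂ (Set.range (thetaVar (m + 1) n))
  have hsub : g ∈ P ⊔ T := by
    refine Submodule.span_le.mpr ?_ hg
    rintro _ ⟨α, s, hw, rfl⟩
    have hA : 0 ≤ α.sum fun σ k => (k : ℤ) * a σ :=
      Finset.sum_nonneg fun σ _ => mul_nonneg (Int.natCast_nonneg _) (ha σ).le
    have hS : (s.card : ℤ) * a μ ≤ ∑ j ∈ s, b j := by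
      calc (s.card : ℤ) * a μ = ∑ _j ∈ s, a μ := by simp [mul_comm]
        _ ≤ ∑ j ∈ s, b j := Finset.sum_le_sum fun j _ => hba j μ
    have hcard : s.card ≤ 1 := by
      by_contra hc
      push_neg at hc
      have h2 : (2 : ℤ) ≤ (s.card : ℤ) := by exact_mod_cast hc
      have : (2 : ℤ) * a μ ≤ ∑ j ∈ s, b j :=
        le_trans (mul_le_mul_of_nonneg_right h2 (ha μ).le) hS
      have := hw
      simp only [monWeight] at this
      nlinarith [ha μ]
    interval_cases h : s.card
    · have hs : s = ∅ := Finset.card_eq_zero.mp h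
      subst hs
      apply Submodule.mem_sup_left
      rw [smonomial_empty]
      exact ⟨MvPolynomial.monomial α 1, rfl⟩
    · obtain ⟨j, rfl⟩ := Finset.card_eq_one.mp h
      have hb1 : a μ ≤ b j := hba j μ
      have hsum : ∑ k ∈ ({j} : Finset (Fin n)), b k = b j := by simp
      have hA0 : (α.sum fun σ k => (k : ℤ) * a σ) = 0 := by
        simp only [monWeight, hsum] at hw
        omega
      have hα : α = 0 := by
        ext σ
        by_cases hσ : σ ∈ α.support
        · have := (Finset.sum_eq_zero_iff_of_nonneg
            (fun τ _ => mul_nonneg (Int.natCast_nonneg (α τ)) (ha τ).le)).mp hA0 σ hσ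
          have haσ := ha σ
          have : (α σ : ℤ) = 0 := by
            rcases mul_eq_zero.mp this with h' | h'
            · exact h'
            · omega
          exact_mod_cast this
        · simpa using Finsupp.notMem_support_iff.mp hσ
      subst hα
      apply Submodule.mem_sup_right
      rw [smonomial_single]
      exact Submodule.subset_span ⟨j, rfl⟩
  obtain ⟨u, hu, v, hv, huv⟩ := Submodule.mem_sup.mp hsub
  have hbv : bodyMap (m + 1) n v = 0 := by
    have : T ≤ LinearMap.ker (bodyMap (m + 1) n).toLinearMap := by
      apply Submodule.span_le.mpr
      rintro _ ⟨j, rfl⟩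
      exact LinearMap.mem_ker.mpr (bodyMap_thetaVar _ _ j)
    exact LinearMap.mem_ker.mp (this hv)
  have hbg : bodyMap (m + 1) n g = 0 :=
    (TwoSidedIdeal.mem_ker _).mp (fermIdealSq_le_kerBody _ _ g hg2)
  obtain ⟨p, hp⟩ := hu
  have hbu : bodyMap (m + 1) n u = p := by rw [← hp]; exact bodyMap_includeLeft _ _ p
  have hp0 : p = 0 := by
    have := congrArg (bodyMap (m + 1) n) huv
    rw [map_add, hbu, hbv, add_zero] at this
    rw [this, hbg]
  have hu0 : u = 0 := by rw [← hp, hp0, map_zero]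
  have hgv : g = v := by rw [← huv, hu0, zero_add]
  obtain ⟨c, hc⟩ := (Submodule.mem_span_range_iff_exists_fun ℂ).mp hv
  have hRg : Rmap (m + 1) n g = 0 := fermIdealSq_le_kerR _ _ g hg2
  have hRv : Rmap (m + 1) n v = 0 := by rw [← hgv]; exact hRg
  have hsnd : ∑ j, c j • (Pi.single j 1 : Fin n → ℂ) = 0 := by
    have h5 : TrivSqZeroExt.snd (Rmap (m + 1) n (∑ j, c j • thetaVar (m + 1) n j)) = 0 := by
      rw [hc, hRv]; rfl
    rw [map_sum] at h5
    simpa [Rmap_thetaVar, TrivSqZeroExt.snd_sum, TrivSqZeroExt.snd_smul] using h5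
  have hc0 : ∀ j, c j = 0 := by
    intro j
    have := congrFun hsnd j
    simpa [Pi.single_apply, Finset.sum_apply] using this
  rw [hgv, ← hc]
  simp [hc0]

end Aux

/-- If the weights a, b are positive with b_j ≥ a^σ for all j, σ, then any
homogeneously non-reduced family F of even, homogeneous, irreducible elements of ℂ[x|θ] is
homogeneously non-split: no ℂ-algebra automorphism φ of ℂ[x|θ] satisfies conditions
(i), (ii), (iii) of a homogeneous splitting. -/
theorem positive_homogeneously_nonreduced_implies_homogeneously_nonsplit
    (m n r : ℕ) (a : Fin (m + 1) → ℤ) (b : Fin n → ℤ)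
    (ha : ∀ σ, 0 < a σ) (hb : ∀ j, 0 < b j)
    (hba : ∀ (j : Fin n) (σ : Fin (m + 1)), a σ ≤ b j)
    (F : Fin r → SuperAlg (m + 1) n)
    (hev : ∀ i, IsEvenElem (m + 1) n (F i))
    (hhom : ∀ i, ∃ d : ℤ, IsHomogOfWeight (m + 1) n a b d (F i))
    (hirr : ∀ i, Irreducible (bodyMap (m + 1) n (F i)))
    (hnonred : ∃ i, F i ∉ polySub (m + 1) n) :
    ¬ ∃ φ : SuperAlg (m + 1) n ≃ₐ[ℂ] SuperAlg (m + 1) n,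
      (∀ μ, φ (xVar (m + 1) n μ) - xVar (m + 1) n μ ∈ fermIdealSq (m + 1) n) ∧
      (∀ j, φ (thetaVar (m + 1) n j) - thetaVar (m + 1) n j ∈ fermIdealSq (m + 1) n) ∧
      (∀ μ, IsHomogOfWeight (m + 1) n a b (a μ) (φ (xVar (m + 1) n μ))) ∧
      (∀ j, IsHomogOfWeight (m + 1) n a b (b j) (φ (thetaVar (m + 1) n j))) ∧
      (∀ i, φ (F i) ∈ polySub (m + 1) n) := by
  rintro ⟨φ, hφx, hφθ, hφxw, hφθw, hφF⟩
  obtain ⟨i0, hi0⟩ := hnonred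
  -- Step A: φ fixes each xVar.
  have hfix : ∀ μ, φ (xVar (m + 1) n μ) = xVar (m + 1) n μ := by
    intro μ
    have hgw : IsHomogOfWeight (m + 1) n a b (a μ)
        (φ (xVar (m + 1) n μ) - xVar (m + 1) n μ) :=
      Submodule.sub_mem _ (hφxw μ) (xVar_homog (m + 1) n a b μ)
    have := key_vanish m n a b ha hba μ _ hgw (hφx μ)
    exact sub_eq_zero.mp this
  -- Step B: φ fixes polySub pointwise.
  have hB : ∀ p : MvPolynomial (Fin (m + 1)) ℂ,
      φ ((Algebra.TensorProduct.includeLeft :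
        MvPolynomial (Fin (m + 1)) ℂ →ₐ[ℂ] SuperAlg (m + 1) n) p) =
      (Algebra.TensorProduct.includeLeft :
        MvPolynomial (Fin (m + 1)) ℂ →ₐ[ℂ] SuperAlg (m + 1) n) p := by
    have hcomp : (φ.toAlgHom.comp (Algebra.TensorProduct.includeLeft :
        MvPolynomial (Fin (m + 1)) ℂ →ₐ[ℂ] SuperAlg (m + 1) n)) =
        Algebra.TensorProduct.includeLeft := by
      apply MvPolynomial.algHom_ext
      intro μ
      simpa [Algebra.TensorProduct.includeLeft_apply, xVar] using hfix μ
    exact fun p => DFunLike.congr_fun hcomp p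
  -- Step C: bodyMap ∘ φ = bodyMap.
  have hC : (bodyMap (m + 1) n).comp φ.toAlgHom = bodyMap (m + 1) n := by
    apply superAlgHom_ext
    · intro μ
      simp only [AlgHom.coe_comp, Function.comp_apply, AlgEquiv.toAlgHom_eq_coe,
        AlgHom.coe_coe]
      exact congrArg (bodyMap (m + 1) n) (hfix μ)
    · intro j
      have h0 : bodyMap (m + 1) n (φ (thetaVar (m + 1) n j) - thetaVar (m + 1) n j) = 0 :=
        (TwoSidedIdeal.mem_ker _).mp (fermIdealSq_le_kerBody _ _ _ (hφθ j))
      rw [map_sub] at h0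
      simp only [AlgHom.coe_comp, Function.comp_apply, AlgEquiv.toAlgHom_eq_coe,
        AlgHom.coe_coe]
      exact sub_eq_zero.mp h0
  -- Step D: conclude.
  obtain ⟨q, hq⟩ := hφF i0
  have h1 : bodyMap (m + 1) n (φ (F i0)) = bodyMap (m + 1) n (F i0) :=
    DFunLike.congr_fun hC (F i0)
  have h2 : bodyMap (m + 1) n (φ (F i0)) = q := by
    rw [← hq]; exact bodyMap_includeLeft _ _ q
  have h3 : φ (F i0) = (Algebra.TensorProduct.includeLeft :
      MvPolynomial (Fin (m + 1)) ℂ →ₐ[ℂ] SuperAlg (m + 1) n)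
        (bodyMap (m + 1) n (F i0)) := by
    rw [← h1, h2]; exact hq.symm
  have h4 : φ ((Algebra.TensorProduct.includeLeft :
      MvPolynomial (Fin (m + 1)) ℂ →ₐ[ℂ] SuperAlg (m + 1) n)
        (bodyMap (m + 1) n (F i0))) = φ (F i0) := by
    rw [hB, ← h3]
  exact hi0 ⟨bodyMap (m + 1) n (F i0), φ.injective h4⟩
end

section
/- Take all even weights equal to 1 (a^μ = 1 for every μ) and let b₁,…,b_n be arbitrary positive integers. Let F = (f¹,…,f^r) be a finite family of elements of ℂ[x|θ], each of which is even, homogeneous of some weight, and irreducible. If F is homogeneously non-reduced, then F is homogeneously non-split: no ℂ-algebra automorphism φ of ℂ[x|θ] satisfies conditions (i), (ii) and (iii) of a homogeneous splitting. (This is the statement that any homogeneously non-reduced subvariety of a positive projective superspace ℙ^{m|n}_ℂ(1|b) is homogeneously non-split.) -/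
open scoped TensorProduct

noncomputable section Aux

open Polynomial

namespace SuperAux

variable (m n : ℕ)

/-- The θ-degree filtration: span of monomials with at least `k` θ-factors. -/
def Mk (k : ℕ) : Submodule ℂ (SuperAlg m n) :=
  Submodule.span ℂ {g | ∃ α s, k ≤ s.card ∧ g = smonomial m n α s}

variable {m n}

theorem smon_mem_Mk {k : ℕ} {α : Fin m →₀ ℕ} {s : Finset (Fin n)} (h : k ≤ s.card) :
    smonomial m n α s ∈ Mk m n k :=
  Submodule.subset_span ⟨α, s, h, rfl⟩

theorem Mk_antitone {k l : ℕ} (h : k ≤ l) : Mk m n l ≤ Mk m n k :=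
  Submodule.span_mono (fun _ ⟨α, s, hc, hg⟩ => ⟨α, s, le_trans h hc, hg⟩)

theorem thetaProd_empty : thetaProd m n ∅ = 1 := by
  simp [thetaProd, Finset.sort_empty]

theorem thetaProd_singleton (j : Fin n) : thetaProd m n {j} = thetaVar m n j := by
  simp [thetaProd, Finset.sort_singleton]

theorem smonomial_empty (α : Fin m →₀ ℕ) :
    smonomial m n α ∅ = (MvPolynomial.monomial α (1 : ℂ)) ⊗ₜ[ℂ] 1 := by
  simp [smonomial, thetaProd_empty]

theorem thetaProd_eq_smon (s : Finset (Fin n)) : thetaProd m n s = smonomial m n 0 s := by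
  rw [smonomial, MvPolynomial.monomial_zero', MvPolynomial.C_1,
    Algebra.TensorProduct.one_def.symm, one_mul]

theorem thetaVar_anticomm (i j : Fin n) :
    thetaVar m n i * thetaVar m n j = - (thetaVar m n j * thetaVar m n i) := by
  have h := ExteriorAlgebra.ι_add_mul_swap (R := ℂ) (M := Fin n → ℂ)
    (Pi.single i (1:ℂ)) (Pi.single j (1:ℂ))
  simp only [thetaVar, Algebra.TensorProduct.tmul_mul_tmul, one_mul]
  rw [eq_neg_iff_add_eq_zero, ← TensorProduct.tmul_add, h, TensorProduct.tmul_zero]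

theorem thetaVar_sq (j : Fin n) : thetaVar m n j * thetaVar m n j = 0 := by
  simp only [thetaVar, Algebra.TensorProduct.tmul_mul_tmul, one_mul]
  rw [ExteriorAlgebra.ι_sq_zero, TensorProduct.tmul_zero]

theorem commute_left_tmul (p : MvPolynomial (Fin m) ℂ) (w : ExteriorAlgebra ℂ (Fin n → ℂ)) :
    Commute (p ⊗ₜ[ℂ] 1 : SuperAlg m n) (1 ⊗ₜ[ℂ] w) := by
  simp only [Commute, SemiconjBy, Algebra.TensorProduct.tmul_mul_tmul, one_mul, mul_one]

theorem commute_left_thetaVar (p : MvPolynomial (Fin m) ℂ) (j : Fin n) :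
    Commute (p ⊗ₜ[ℂ] 1 : SuperAlg m n) (thetaVar m n j) :=
  commute_left_tmul p _

theorem commute_left_thetaProd (p : MvPolynomial (Fin m) ℂ) (s : Finset (Fin n)) :
    Commute (p ⊗ₜ[ℂ] 1 : SuperAlg m n) (thetaProd m n s) := by
  refine Commute.list_prod_right _ _ (fun x hx => ?_)
  obtain ⟨j, _, rfl⟩ := List.mem_map.1 hx
  exact commute_left_thetaVar p j

/-- Head insertion: if `j` is below everything in `s`, then `θ_j · θ_s = θ_{insert j s}`. -/
theorem thetaVar_mul_thetaProd_of_lt {j : Fin n} {s : Finset (Fin n)}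
    (h : ∀ i ∈ s, j < i) :
    thetaVar m n j * thetaProd m n s = thetaProd m n (insert j s) := by
  have hj : j ∉ s := fun hj => lt_irrefl j (h j hj)
  rw [thetaProd, thetaProd, Finset.sort_insert (· ≤ ·) (fun b hb => (h b hb).le) hj,
    List.map_cons, List.prod_cons]

/-- Decomposition of a nonempty θ-product at its minimum. -/
theorem thetaProd_min_decomp {s : Finset (Fin n)} (hs : s.Nonempty) :
    thetaProd m n s = thetaVar m n (s.min' hs) * thetaProd m n (s.erase (s.min' hs)) := by
  rw [thetaVar_mul_thetaProd_of_lt (fun i hi => ?_), Finset.insert_erase (s.min'_mem hs)]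
  exact lt_of_le_of_ne (s.min'_le i (Finset.mem_of_mem_erase hi))
    (Ne.symm (Finset.ne_of_mem_erase hi))

end SuperAux

end Aux

noncomputable section Aux2

namespace SuperAux

variable {m n : ℕ}

/-- Multiplying an ordered θ-product by one more θ lands in the span of longer θ-products. -/
theorem thetaVar_mul_thetaProd_mem (j : Fin n) (s : Finset (Fin n)) :
    thetaVar m n j * thetaProd m n s ∈
      Submodule.span ℂ {g | ∃ u : Finset (Fin n),
        u ⊆ insert j s ∧ s.card + 1 ≤ u.card ∧ g = thetaProd m n u} := by
  induction s using Finset.strongInduction generalizing j with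
  | _ s ih =>
  rcases s.eq_empty_or_nonempty with rfl | hs
  · rw [thetaProd_empty, mul_one, ← thetaProd_singleton j]
    exact Submodule.subset_span ⟨{j}, by simp, by simp, rfl⟩
  · obtain ⟨i, hi⟩ : ∃ i, i = s.min' hs := ⟨_, rfl⟩
    have hims : i ∈ s := hi ▸ s.min'_mem hs
    have hmin : ∀ i' ∈ s, i ≤ i' := fun i' h' => hi ▸ s.min'_le i' h'
    have hdec : thetaProd m n s = thetaVar m n i * thetaProd m n (s.erase i) := by
      rw [hi]; exact thetaProd_min_decomp hs
    rcases lt_trichotomy j i with hji | hji | hji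
    · have hlt : ∀ i' ∈ s, j < i' := fun i' hi' => lt_of_lt_of_le hji (hmin i' hi')
      rw [thetaVar_mul_thetaProd_of_lt hlt]
      have hjs : j ∉ s := fun hj => lt_irrefl j (hlt j hj)
      exact Submodule.subset_span
        ⟨insert j s, Finset.Subset.refl _, by rw [Finset.card_insert_of_notMem hjs], rfl⟩
    · rw [hdec, hji, ← mul_assoc, thetaVar_sq, zero_mul]
      exact Submodule.zero_mem _
    · -- j > i : anticommute past the minimum and use the inductive hypothesis
      have hsub : s.erase i ⊂ s := Finset.erase_ssubset hims
      have hIH := ih (s.erase i) hsub j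
      have key : ∀ g ∈ Submodule.span ℂ {g | ∃ u : Finset (Fin n),
          u ⊆ insert j (s.erase i) ∧ (s.erase i).card + 1 ≤ u.card ∧ g = thetaProd m n u},
          thetaVar m n i * g ∈ Submodule.span ℂ {g | ∃ u : Finset (Fin n),
            u ⊆ insert j s ∧ s.card + 1 ≤ u.card ∧ g = thetaProd m n u} := by
        intro g hg
        induction hg using Submodule.span_induction with
        | mem g hg =>
          obtain ⟨u, hu, hcard, rfl⟩ := hg
          have hi_lt : ∀ i' ∈ u, i < i' := by
            intro i' hi'
            rcases Finset.mem_insert.1 (hu hi') with rfl | hmem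
            · exact hji
            · exact lt_of_le_of_ne (hmin i' (Finset.mem_of_mem_erase hmem))
                (Ne.symm (Finset.ne_of_mem_erase hmem))
          rw [thetaVar_mul_thetaProd_of_lt hi_lt]
          refine Submodule.subset_span ⟨insert i u, ?_, ?_, rfl⟩
          · intro x hx
            rcases Finset.mem_insert.1 hx with rfl | hx
            · exact Finset.mem_insert_of_mem hims
            · rcases Finset.mem_insert.1 (hu hx) with rfl | hx
              · exact Finset.mem_insert_self _ _
              · exact Finset.mem_insert_of_mem (Finset.mem_of_mem_erase hx)
          · have hiu : i ∉ u := fun hiu => lt_irrefl i (hi_lt i hiu)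
            rw [Finset.card_insert_of_notMem hiu]
            have : (s.erase i).card + 1 = s.card := Finset.card_erase_add_one hims
            omega
        | zero => rw [mul_zero]; exact Submodule.zero_mem _
        | add x y _ _ hx hy => rw [mul_add]; exact Submodule.add_mem _ hx hy
        | smul c x _ hx => rw [mul_smul_comm]; exact Submodule.smul_mem _ c hx
      have hneg : thetaVar m n j * thetaProd m n s
          = -(thetaVar m n i * (thetaVar m n j * thetaProd m n (s.erase i))) :=
        calc thetaVar m n j * thetaProd m n s
            = (thetaVar m n j * thetaVar m n i) * thetaProd m n (s.erase i) := by
              rw [hdec, mul_assoc]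
          _ = (-(thetaVar m n i * thetaVar m n j)) * thetaProd m n (s.erase i) := by
              rw [thetaVar_anticomm j i]
          _ = -(thetaVar m n i * (thetaVar m n j * thetaProd m n (s.erase i))) :=
              (neg_mul (thetaVar m n i * thetaVar m n j) (thetaProd m n (s.erase i))).trans
                (congrArg Neg.neg (mul_assoc _ _ _))
      rw [hneg]
      exact Submodule.neg_mem _ (key _ hIH)

/-- Product of two ordered θ-products lies in the span of θ-products of length
at least the sum of lengths. -/
theorem thetaProd_mul_thetaProd_mem (s t : Finset (Fin n)) :
    thetaProd m n s * thetaProd m n t ∈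
      Submodule.span ℂ {g | ∃ u : Finset (Fin n),
        s.card + t.card ≤ u.card ∧ g = thetaProd m n u} := by
  induction s using Finset.strongInduction with
  | _ s ih =>
  rcases s.eq_empty_or_nonempty with rfl | hs
  · rw [thetaProd_empty, one_mul]
    exact Submodule.subset_span ⟨t, by simp, rfl⟩
  · obtain ⟨i, hi⟩ : ∃ i, i = s.min' hs := ⟨_, rfl⟩
    have hims : i ∈ s := hi ▸ s.min'_mem hs
    have hcard : (s.erase i).card + 1 = s.card := Finset.card_erase_add_one hims
    have hIH := ih (s.erase i) (Finset.erase_ssubset hims)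
    have hdec : thetaProd m n s = thetaVar m n i * thetaProd m n (s.erase i) := by
      rw [hi]; exact thetaProd_min_decomp hs
    rw [hdec, mul_assoc]
    have key : ∀ g ∈ Submodule.span ℂ {g | ∃ u : Finset (Fin n),
        (s.erase i).card + t.card ≤ u.card ∧ g = thetaProd m n u},
        thetaVar m n i * g ∈ Submodule.span ℂ {g | ∃ u : Finset (Fin n),
          s.card + t.card ≤ u.card ∧ g = thetaProd m n u} := by
      intro g hg
      induction hg using Submodule.span_induction with
      | mem g hg =>
        obtain ⟨u, hcu, rfl⟩ := hg
        refine Submodule.span_le.2 ?_ (thetaVar_mul_thetaProd_mem i u)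
        rintro g ⟨w, _, hcw, rfl⟩
        exact Submodule.subset_span ⟨w, by omega, rfl⟩
      | zero => rw [mul_zero]; exact Submodule.zero_mem _
      | add x y _ _ hx hy => rw [mul_add]; exact Submodule.add_mem _ hx hy
      | smul c x _ hx => rw [mul_smul_comm]; exact Submodule.smul_mem _ c hx
    exact key _ hIH

/-- The filtration is multiplicative: `Mk a · Mk b ⊆ Mk (a+b)`. -/
theorem mul_mem_Mk {a b : ℕ} {g h : SuperAlg m n}
    (hg : g ∈ Mk m n a) (hh : h ∈ Mk m n b) : g * h ∈ Mk m n (a + b) := by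
  induction hg using Submodule.span_induction generalizing h with
  | mem g hgen =>
    obtain ⟨α, s, hcs, rfl⟩ := hgen
    induction hh using Submodule.span_induction with
    | mem h hgen' =>
      obtain ⟨β, t, hct, rfl⟩ := hgen'
      have key : smonomial m n α s * smonomial m n β t
          = ((MvPolynomial.monomial (α + β) (1 : ℂ)) ⊗ₜ[ℂ] 1)
            * (thetaProd m n s * thetaProd m n t) := by
        rw [smonomial, smonomial, mul_assoc, ← mul_assoc (thetaProd m n s),
          ← (commute_left_thetaProd (MvPolynomial.monomial β 1) s).eq, mul_assoc,
          ← mul_assoc, Algebra.TensorProduct.tmul_mul_tmul, one_mul,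
          MvPolynomial.monomial_mul, one_mul]
      rw [key]
      have key2 : ∀ g ∈ Submodule.span ℂ {g | ∃ u : Finset (Fin n),
          s.card + t.card ≤ u.card ∧ g = thetaProd m n u},
          ((MvPolynomial.monomial (α + β) (1 : ℂ)) ⊗ₜ[ℂ] 1) * g ∈ Mk m n (a + b) := by
        intro g hg
        induction hg using Submodule.span_induction with
        | mem g hgen'' =>
          obtain ⟨u, hcu, rfl⟩ := hgen''
          rw [thetaProd_eq_smon u]
          show _ * smonomial m n 0 u ∈ _
          rw [smonomial, ← mul_assoc, Algebra.TensorProduct.tmul_mul_tmul, one_mul,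
            MvPolynomial.monomial_mul, mul_one, add_zero, ← smonomial]
          exact smon_mem_Mk (le_trans (add_le_add hcs hct) hcu)
        | zero => rw [mul_zero]; exact Submodule.zero_mem _
        | add x y _ _ hx hy => rw [mul_add]; exact Submodule.add_mem _ hx hy
        | smul c x _ hx => rw [mul_smul_comm]; exact Submodule.smul_mem _ c hx
      exact key2 _ (thetaProd_mul_thetaProd_mem s t)
    | zero => rw [mul_zero]; exact Submodule.zero_mem _
    | add x y _ _ hx hy => rw [mul_add]; exact Submodule.add_mem _ hx hy
    | smul c x _ hx => rw [mul_smul_comm]; exact Submodule.smul_mem _ c hx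
  | zero => rw [zero_mul]; exact Submodule.zero_mem _
  | add x y _ _ hx hy => rw [add_mul]; exact Submodule.add_mem _ (hx hh) (hy hh)
  | smul c x _ hx => rw [smul_mul_assoc]; exact Submodule.smul_mem _ c (hx hh)

end SuperAux

end Aux2

noncomputable section Aux3

namespace SuperAux

variable {m n : ℕ}

theorem tmul_one_mem_Mk0 (p : MvPolynomial (Fin m) ℂ) :
    (p ⊗ₜ[ℂ] 1 : SuperAlg m n) ∈ Mk m n 0 := by
  have h : (p ⊗ₜ[ℂ] 1 : SuperAlg m n)
      = ∑ v ∈ p.support, (MvPolynomial.monomial v (MvPolynomial.coeff v p)) ⊗ₜ[ℂ] 1 := by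
    rw [← TensorProduct.sum_tmul, MvPolynomial.support_sum_monomial_coeff p]
  rw [h]
  refine Submodule.sum_mem _ (fun v _ => ?_)
  have h2 : (MvPolynomial.monomial v (MvPolynomial.coeff v p)) ⊗ₜ[ℂ] (1 : ExteriorAlgebra ℂ (Fin n → ℂ))
      = MvPolynomial.coeff v p • (smonomial m n v ∅) := by
    rw [smonomial_empty, TensorProduct.smul_tmul', MvPolynomial.smul_monomial, smul_eq_mul, mul_one]
  rw [h2]
  exact Submodule.smul_mem _ _ (smon_mem_Mk (Nat.zero_le _))

theorem thetaVar_mem_Mk1 (j : Fin n) : thetaVar m n j ∈ Mk m n 1 := by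
  rw [← thetaProd_singleton j, thetaProd_eq_smon]
  exact smon_mem_Mk (by simp)

theorem mem_Mk0 (z : SuperAlg m n) : z ∈ Mk m n 0 := by
  induction z using TensorProduct.induction_on with
  | zero => exact Submodule.zero_mem _
  | add x y hx hy => exact Submodule.add_mem _ hx hy
  | tmul p w =>
    induction w using ExteriorAlgebra.induction generalizing p with
    | algebraMap r =>
      rw [Algebra.algebraMap_eq_smul_one, TensorProduct.tmul_smul]
      exact Submodule.smul_mem _ _ (tmul_one_mem_Mk0 p)
    | ι v =>
      have hv : v = ∑ j, v j • (Pi.single j 1 : Fin n → ℂ) := by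
        funext k
        simp [Finset.sum_apply, Pi.single_apply]
      have h1 : ExteriorAlgebra.ι ℂ v
          = ∑ j, v j • ExteriorAlgebra.ι ℂ (Pi.single j 1 : Fin n → ℂ) := by
        conv_lhs => rw [hv]
        rw [map_sum]
        exact Finset.sum_congr rfl (fun j _ => map_smul _ _ _)
      rw [h1, TensorProduct.tmul_sum]
      refine Submodule.sum_mem _ (fun j _ => ?_)
      rw [TensorProduct.tmul_smul]
      refine Submodule.smul_mem _ _ ?_
      have h2 : (p ⊗ₜ[ℂ] ExteriorAlgebra.ι ℂ (Pi.single j 1 : Fin n → ℂ) : SuperAlg m n)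
          = (p ⊗ₜ[ℂ] 1) * thetaVar m n j := by
        rw [thetaVar, Algebra.TensorProduct.tmul_mul_tmul, mul_one, one_mul]
      rw [h2]
      exact mul_mem_Mk (a := 0) (b := 0) (tmul_one_mem_Mk0 p)
        (Mk_antitone (Nat.zero_le 1) (thetaVar_mem_Mk1 j))
    | mul w₁ w₂ h₁ h₂ =>
      have h3 : (p ⊗ₜ[ℂ] (w₁ * w₂) : SuperAlg m n) = (p ⊗ₜ[ℂ] w₁) * ((1:MvPolynomial (Fin m) ℂ) ⊗ₜ[ℂ] w₂) := by
        rw [Algebra.TensorProduct.tmul_mul_tmul, mul_one]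
      rw [h3]
      exact mul_mem_Mk (a := 0) (b := 0) (h₁ p) (h₂ 1)
    | add w₁ w₂ h₁ h₂ =>
      rw [TensorProduct.tmul_add]
      exact Submodule.add_mem _ (h₁ p) (h₂ p)

theorem mul_mem_Mk_left (x : SuperAlg m n) {y : SuperAlg m n} {k : ℕ}
    (hy : y ∈ Mk m n k) : x * y ∈ Mk m n k := by
  have h := mul_mem_Mk (a := 0) (mem_Mk0 x) hy
  rwa [Nat.zero_add] at h

theorem mul_mem_Mk_right {x : SuperAlg m n} (y : SuperAlg m n) {k : ℕ}
    (hx : x ∈ Mk m n k) : x * y ∈ Mk m n k := by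
  have h := mul_mem_Mk (b := 0) hx (mem_Mk0 y)
  rwa [Nat.add_zero] at h

variable (m n) in
/-- The filtration level `Mk k` as a two-sided ideal. -/
def MkIdeal (k : ℕ) : TwoSidedIdeal (SuperAlg m n) :=
  TwoSidedIdeal.mk' (Mk m n k) (Submodule.zero_mem _)
    (fun hx hy => Submodule.add_mem _ hx hy)
    (fun hx => Submodule.neg_mem _ hx)
    (fun {x y} hy => mul_mem_Mk_left x hy)
    (fun {x y} hx => mul_mem_Mk_right y hx)

theorem mem_MkIdeal_iff {k : ℕ} {z : SuperAlg m n} :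
    z ∈ MkIdeal m n k ↔ z ∈ Mk m n k :=
  TwoSidedIdeal.mem_mk' _ _ _ _ _ _ z

theorem fermIdeal_le_Mk1 {z : SuperAlg m n} (hz : z ∈ fermIdeal m n) : z ∈ Mk m n 1 := by
  rw [fermIdeal, TwoSidedIdeal.mem_span_iff] at hz
  exact mem_MkIdeal_iff.1 (hz (MkIdeal m n 1) (by
    rintro _ ⟨j, rfl⟩
    exact mem_MkIdeal_iff.2 (thetaVar_mem_Mk1 j)))

theorem fermIdealSq_le_Mk2 {z : SuperAlg m n} (hz : z ∈ fermIdealSq m n) : z ∈ Mk m n 2 := by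
  rw [fermIdealSq, TwoSidedIdeal.mem_span_iff] at hz
  exact mem_MkIdeal_iff.1 (hz (MkIdeal m n 2) (by
    rintro _ ⟨u, hu, v, hv, rfl⟩
    exact mem_MkIdeal_iff.2
      (mul_mem_Mk (a := 1) (b := 1) (fermIdeal_le_Mk1 hu) (fermIdeal_le_Mk1 hv))))

theorem smon_empty_mem_polySub (α : Fin m →₀ ℕ) : smonomial m n α ∅ ∈ polySub m n := by
  rw [smonomial_empty]
  exact ⟨MvPolynomial.monomial α 1, rfl⟩

end SuperAux

end Aux3

noncomputable section Aux4

set_option maxHeartbeats 1000000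
set_option synthInstance.maxHeartbeats 200000

namespace SuperAux

open Polynomial

variable {m n : ℕ}

theorem list_sum_sort (s : Finset (Fin n)) (f : Fin n → ℕ) :
    ((s.sort (· ≤ ·)).map f).sum = ∑ j ∈ s, f j := by
  rw [Finset.sum, ← Finset.sort_eq (r := (· ≤ ·)) (s := s), Multiset.map_coe, Multiset.sum_coe]

variable (m n) in
/-- The image of θ_j under the weighting map. -/
def genTheta (b : Fin n → ℤ) (j : Fin n) : Polynomial (SuperAlg m n) :=
  C (thetaVar m n j) * X ^ (b j).toNat

theorem CX_mul_CX (a c : SuperAlg m n) (i k : ℕ) :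
    (C a * X ^ i) * (C c * X ^ k) = C (a * c) * X ^ (i + k) := by
  rw [mul_assoc, ← mul_assoc (X ^ i), Polynomial.X_pow_mul, mul_assoc, ← pow_add,
    ← mul_assoc, ← Polynomial.C_mul]

variable (m n) in
/-- The linear map underlying the odd part of the weighting map. -/
def fOdd (b : Fin n → ℤ) : (Fin n → ℂ) →ₗ[ℂ] Polynomial (SuperAlg m n) :=
  ∑ j, (LinearMap.proj j : (Fin n → ℂ) →ₗ[ℂ] ℂ).smulRight (genTheta m n b j)

theorem fOdd_apply (b : Fin n → ℤ) (v : Fin n → ℂ) :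
    fOdd m n b v = ∑ j, v j • genTheta m n b j := by
  simp [fOdd, LinearMap.sum_apply, LinearMap.smulRight_apply, LinearMap.proj_apply]

theorem thetaVar_mul_comm_neg (i j : Fin n) :
    thetaVar m n i * thetaVar m n j = -(thetaVar m n j * thetaVar m n i) :=
  thetaVar_anticomm i j

theorem fOdd_sq (b : Fin n → ℤ) (v : Fin n → ℂ) : fOdd m n b v * fOdd m n b v = 0 := by
  rw [fOdd_apply, Finset.sum_mul_sum]
  have hterm : ∀ j k : Fin n, (v j • genTheta m n b j) * (v k • genTheta m n b k)
      + (v k • genTheta m n b k) * (v j • genTheta m n b j) = 0 := by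
    intro j k
    rw [smul_mul_smul_comm, smul_mul_smul_comm, genTheta, genTheta,
      CX_mul_CX, CX_mul_CX, mul_comm (v k) (v j), Nat.add_comm ((b k).toNat),
      ← smul_add, ← add_mul, ← map_add, thetaVar_anticomm j k, neg_add_cancel,
      map_zero, zero_mul, smul_zero]
  have h2 : (∑ j, ∑ k, (v j • genTheta m n b j) * (v k • genTheta m n b k))
      + (∑ j, ∑ k, (v j • genTheta m n b j) * (v k • genTheta m n b k)) = 0 := by
    nth_rewrite 2 [Finset.sum_comm]
    rw [← Finset.sum_add_distrib]
    have hz : ∀ j ∈ (Finset.univ : Finset (Fin n)),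
        ((∑ k, (v j • genTheta m n b j) * (v k • genTheta m n b k))
          + ∑ k, (v k • genTheta m n b k) * (v j • genTheta m n b j)) = 0 := by
      intro j _
      rw [← Finset.sum_add_distrib]
      exact Finset.sum_eq_zero (fun k _ => hterm j k)
    rw [Finset.sum_congr rfl hz, Finset.sum_const_zero]
  set S := ∑ j, ∑ k, (v j • genTheta m n b j) * (v k • genTheta m n b k) with hS
  have h3 : ((2:ℂ)⁻¹ * 2) • S = S := by norm_num
  rw [← h3, mul_smul, two_smul, h2, smul_zero]

variable (m n) in
/-- The odd half of the weighting homomorphism. -/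
def PsiE (b : Fin n → ℤ) : ExteriorAlgebra ℂ (Fin n → ℂ) →ₐ[ℂ] Polynomial (SuperAlg m n) :=
  ExteriorAlgebra.lift ℂ ⟨fOdd m n b, fOdd_sq b⟩

theorem PsiE_ι (b : Fin n → ℤ) (v : Fin n → ℂ) :
    PsiE m n b (ExteriorAlgebra.ι ℂ v) = fOdd m n b v := by
  unfold PsiE
  exact ExteriorAlgebra.lift_ι_apply (R := ℂ) (fOdd m n b) (fOdd_sq b) v

variable (m n) in
/-- The even half of the weighting homomorphism. -/
def PsiP : MvPolynomial (Fin m) ℂ →ₐ[ℂ] Polynomial (SuperAlg m n) :=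
  (Polynomial.mapAlgHom (Algebra.TensorProduct.includeLeft :
      MvPolynomial (Fin m) ℂ →ₐ[ℂ] SuperAlg m n)).comp
    (MvPolynomial.aeval (fun μ => Polynomial.C (MvPolynomial.X μ) * Polynomial.X))

theorem PsiP_X (μ : Fin m) : PsiP m n (MvPolynomial.X μ) = C (xVar m n μ) * X := by
  simp [PsiP, Polynomial.mapAlgHom, xVar]

theorem PsiP_monomial (α : Fin m →₀ ℕ) :
    PsiP m n (MvPolynomial.monomial α 1)
      = C ((MvPolynomial.monomial α (1:ℂ)) ⊗ₜ[ℂ] 1) * X ^ (α.sum fun _ k => k) := by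
  have inner : (MvPolynomial.aeval (fun μ => Polynomial.C (MvPolynomial.X μ) * Polynomial.X)
      (MvPolynomial.monomial α (1:ℂ)) : Polynomial (MvPolynomial (Fin m) ℂ))
      = Polynomial.C (MvPolynomial.monomial α (1:ℂ)) * Polynomial.X ^ (α.sum fun _ k => k) := by
    rw [MvPolynomial.aeval_monomial, map_one, one_mul]
    have h1 : (α.prod fun μ k => (Polynomial.C (MvPolynomial.X (R := ℂ) μ) * Polynomial.X) ^ k)
        = (α.prod fun μ k => Polynomial.C (MvPolynomial.X (R := ℂ) μ ^ k) * Polynomial.X ^ k) := by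
      refine Finset.prod_congr rfl (fun μ _ => ?_)
      dsimp only
      rw [mul_pow, map_pow]
    rw [h1, Finsupp.prod, Finset.prod_mul_distrib, ← map_prod, Finset.prod_pow_eq_pow_sum]
    congr 2
    rw [MvPolynomial.monomial_eq, MvPolynomial.C_1, one_mul, Finsupp.prod]
  rw [PsiP, AlgHom.comp_apply, inner]
  simp [Polynomial.mapAlgHom]

theorem commute_CxVar_genTheta (b : Fin n → ℤ) (μ : Fin m) (j : Fin n) :
    Commute (C (xVar m n μ) * X) (genTheta m n b j) := by
  have h1 : Commute (C (xVar m n μ) : Polynomial (SuperAlg m n)) (C (thetaVar m n j)) := by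
    have := commute_left_thetaVar (m := m) (n := n) (MvPolynomial.X μ) j
    exact (this.map (Polynomial.C : SuperAlg m n →+* Polynomial (SuperAlg m n)))
  exact ((h1.mul_right ((Polynomial.commute_X _).symm.pow_right _)).mul_left
    (((Polynomial.commute_X (C (thetaVar m n j))).mul_right
      ((Commute.refl X).pow_right _)) ))

theorem commute_PsiP_genTheta (b : Fin n → ℤ) (p : MvPolynomial (Fin m) ℂ) (j : Fin n) :
    Commute (PsiP m n p) (genTheta m n b j) := by
  induction p using MvPolynomial.induction_on with
  | C r =>
    rw [← MvPolynomial.algebraMap_eq, AlgHom.commutes]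
    exact Algebra.commute_algebraMap_left r _
  | add p q hp hq => rw [map_add]; exact hp.add_left hq
  | mul_X p μ hp => rw [map_mul, PsiP_X]; exact hp.mul_left (commute_CxVar_genTheta b μ j)

theorem commute_PsiP_PsiE (b : Fin n → ℤ) (p : MvPolynomial (Fin m) ℂ)
    (w : ExteriorAlgebra ℂ (Fin n → ℂ)) :
    Commute (PsiP m n p) (PsiE m n b w) := by
  induction w using ExteriorAlgebra.induction with
  | algebraMap r => rw [AlgHom.commutes]; exact Algebra.commute_algebraMap_right r _
  | ι v =>
    rw [PsiE_ι, fOdd_apply]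
    exact Commute.sum_right _ _ _ (fun j _ => (commute_PsiP_genTheta b p j).smul_right (v j))
  | mul w₁ w₂ h₁ h₂ => rw [map_mul]; exact h₁.mul_right h₂
  | add w₁ w₂ h₁ h₂ => rw [map_add]; exact h₁.add_right h₂

variable (m n) in
/-- The weighting homomorphism ℂ[x|θ] → ℂ[x|θ][T], xᵘ ↦ xᵘ·T, θⱼ ↦ θⱼ·T^{bⱼ}. -/
def Psi (b : Fin n → ℤ) : SuperAlg m n →ₐ[ℂ] Polynomial (SuperAlg m n) :=
  Algebra.TensorProduct.lift (PsiP m n) (PsiE m n b) (commute_PsiP_PsiE b)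

theorem Psi_tmul (b : Fin n → ℤ) (p : MvPolynomial (Fin m) ℂ)
    (w : ExteriorAlgebra ℂ (Fin n → ℂ)) :
    Psi m n b (p ⊗ₜ[ℂ] w) = PsiP m n p * PsiE m n b w :=
  Algebra.TensorProduct.lift_tmul _ _ _ _ _

theorem Psi_thetaVar (b : Fin n → ℤ) (j : Fin n) :
    Psi m n b (thetaVar m n j) = genTheta m n b j := by
  rw [thetaVar, Psi_tmul, map_one, one_mul, PsiE_ι, fOdd_apply]
  rw [Finset.sum_eq_single j (fun k _ hk => by
      rw [Pi.single_apply, if_neg hk, zero_smul])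
    (fun h => absurd (Finset.mem_univ j) h)]
  rw [Pi.single_apply, if_pos rfl, one_smul]

theorem Psi_theta_list (b : Fin n → ℤ) (L : List (Fin n)) :
    Psi m n b ((L.map (thetaVar m n)).prod)
      = C ((L.map (thetaVar m n)).prod) * X ^ ((L.map (fun j => (b j).toNat)).sum) := by
  induction L with
  | nil => simp
  | cons j L ih =>
    rw [List.map_cons, List.prod_cons, map_mul, ih, Psi_thetaVar, genTheta, CX_mul_CX,
      List.map_cons, List.sum_cons, ← List.prod_cons, ← List.map_cons]

theorem Psi_thetaProd (b : Fin n → ℤ) (s : Finset (Fin n)) :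
    Psi m n b (thetaProd m n s)
      = C (thetaProd m n s) * X ^ (∑ j ∈ s, (b j).toNat) := by
  rw [thetaProd, Psi_theta_list, list_sum_sort]

theorem Psi_smonomial (b : Fin n → ℤ) (α : Fin m →₀ ℕ) (s : Finset (Fin n)) :
    Psi m n b (smonomial m n α s)
      = C (smonomial m n α s) * X ^ ((α.sum fun _ k => k) + ∑ j ∈ s, (b j).toNat) := by
  rw [smonomial, map_mul, Psi_thetaProd, Psi_tmul, map_one (f := PsiE m n b), mul_one,
    PsiP_monomial, CX_mul_CX]

end SuperAux

end Aux4

noncomputable section Aux5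

set_option maxHeartbeats 1000000
set_option synthInstance.maxHeartbeats 200000

namespace SuperAux

open Polynomial

variable {m n : ℕ}

theorem natWeight_cast (b : Fin n → ℤ) (hb : ∀ j, 0 < b j) (α : Fin m →₀ ℕ)
    (s : Finset (Fin n)) :
    (((α.sum fun _ k => k) + ∑ j ∈ s, (b j).toNat : ℕ) : ℤ)
      = monWeight m n (fun _ => 1) b α s := by
  rw [monWeight]
  push_cast
  congr 1
  · exact Finset.sum_congr rfl (fun μ _ => (mul_one _).symm)
  · exact Finset.sum_congr rfl (fun j _ => Int.toNat_of_nonneg (hb j).le)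

theorem weight_one_Mk2_eq_zero (b : Fin n → ℤ) (hb : ∀ j, 0 < b j) {g : SuperAlg m n}
    (h1 : IsHomogOfWeight m n (fun _ => 1) b 1 g) (h2 : g ∈ Mk m n 2) : g = 0 := by
  have P1 : Psi m n b g = C g * X := by
    clear h2
    induction h1 using Submodule.span_induction with
    | mem g hg =>
      obtain ⟨α, s, hw, rfl⟩ := hg
      have hN : (α.sum fun _ k => k) + ∑ j ∈ s, (b j).toNat = 1 := by
        have := natWeight_cast b hb α s
        rw [hw] at this
        exact_mod_cast this
      rw [Psi_smonomial, hN, pow_one]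
    | zero => rw [map_zero, map_zero, zero_mul]
    | add x y _ _ hx hy => rw [map_add, map_add, add_mul, hx, hy]
    | smul c x _ hx => rw [map_smul, hx, ← smul_mul_assoc, Polynomial.smul_C]
  have P2 : (Psi m n b g).coeff 1 = 0 := by
    clear P1 h1
    induction h2 using Submodule.span_induction with
    | mem g hg =>
      obtain ⟨α, s, hc, rfl⟩ := hg
      rw [Psi_smonomial, Polynomial.coeff_C_mul, Polynomial.coeff_X_pow]
      have hw2 : 2 ≤ (α.sum fun _ k => k) + ∑ j ∈ s, (b j).toNat := by
        have hsum : s.card ≤ ∑ j ∈ s, (b j).toNat := by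
          calc s.card = ∑ _j ∈ s, 1 := by rw [Finset.sum_const, smul_eq_mul, mul_one]
            _ ≤ ∑ j ∈ s, (b j).toNat :=
                Finset.sum_le_sum (fun j _ => by have := hb j; omega)
        omega
      rw [if_neg (by omega), mul_zero]
    | zero => rw [map_zero, Polynomial.coeff_zero]
    | add x y _ _ hx hy => rw [map_add, Polynomial.coeff_add, hx, hy, add_zero]
    | smul c x _ hx => rw [map_smul, Polynomial.coeff_smul, hx, smul_zero]
  rw [P1, Polynomial.coeff_C_mul, Polynomial.coeff_X_one, mul_one] at P2
  exact P2

theorem xVar_eq_smon (μ : Fin m) :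
    xVar m n μ = smonomial m n (Finsupp.single μ 1) ∅ := by
  rw [smonomial_empty]
  rfl

theorem xVar_isHomog (b : Fin n → ℤ) (μ : Fin m) :
    IsHomogOfWeight m n (fun _ => 1) b 1 (xVar m n μ) := by
  refine Submodule.subset_span ⟨Finsupp.single μ 1, ∅, ?_, (xVar_eq_smon μ)⟩
  rw [monWeight]
  simp [Finsupp.sum_single_index]

end SuperAux

end Aux5

noncomputable section Aux6

set_option maxHeartbeats 1000000
set_option synthInstance.maxHeartbeats 200000

namespace SuperAux

variable {m n : ℕ} (φ : SuperAlg m n ≃ₐ[ℂ] SuperAlg m n)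

theorem phi_fixes_polySub (hx : ∀ μ, φ (xVar m n μ) = xVar m n μ)
    {z : SuperAlg m n} (hz : z ∈ polySub m n) : φ z = z := by
  obtain ⟨p, rfl⟩ := hz
  have hcomp : (φ.toAlgHom.comp (Algebra.TensorProduct.includeLeft :
      MvPolynomial (Fin m) ℂ →ₐ[ℂ] SuperAlg m n))
      = Algebra.TensorProduct.includeLeft := by
    refine MvPolynomial.algHom_ext (fun μ => ?_)
    rw [AlgHom.comp_apply, Algebra.TensorProduct.includeLeft_apply]
    exact hx μ
  calc φ (Algebra.TensorProduct.includeLeft p)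
      = (φ.toAlgHom.comp Algebra.TensorProduct.includeLeft) p := rfl
    _ = Algebra.TensorProduct.includeLeft (R := ℂ) p := by rw [hcomp]

theorem theta_list_prod_mem (L : List (Fin n)) :
    ((L.map (thetaVar m n)).prod : SuperAlg m n) ∈ Mk m n L.length := by
  induction L with
  | nil => exact mem_Mk0 _
  | cons j L ih =>
    rw [List.map_cons, List.prod_cons, List.length_cons]
    have := mul_mem_Mk (thetaVar_mem_Mk1 j) ih
    rwa [Nat.add_comm] at this

theorem Mk_mul_mem_le {a c k : ℕ} {x y : SuperAlg m n} (h : k ≤ a + c)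
    (hx : x ∈ Mk m n a) (hy : y ∈ Mk m n c) : x * y ∈ Mk m n k :=
  Mk_antitone h (mul_mem_Mk hx hy)

theorem phi_theta_list (hθ : ∀ j, φ (thetaVar m n j) - thetaVar m n j ∈ Mk m n 2)
    (L : List (Fin n)) :
    ((L.map (fun j => φ (thetaVar m n j))).prod - (L.map (thetaVar m n)).prod : SuperAlg m n)
      ∈ Mk m n (L.length + 1) := by
  induction L with
  | nil => simp only [List.map_nil, List.prod_nil, sub_self]; exact Submodule.zero_mem _
  | cons j L ih =>
    rw [List.map_cons, List.prod_cons, List.map_cons, List.prod_cons, List.length_cons]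
    set P := (L.map (thetaVar m n)).prod with hPdef
    set Q := (L.map (fun j => φ (thetaVar m n j))).prod with hQdef
    set h := φ (thetaVar m n j) - thetaVar m n j with hhdef
    set δ := Q - P with hδdef
    have hφθ : φ (thetaVar m n j) = thetaVar m n j + h := by rw [hhdef]; abel
    have hQ : Q = P + δ := by rw [hδdef]; abel
    have expand : φ (thetaVar m n j) * Q - thetaVar m n j * P
        = thetaVar m n j * δ + (h * P + h * δ) := by
      rw [hφθ, hQ, add_mul, mul_add, mul_add]
      abel
    rw [expand]
    refine Submodule.add_mem _ ?_ (Submodule.add_mem _ ?_ ?_)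
    · refine Mk_mul_mem_le ?_ (thetaVar_mem_Mk1 j) ih; omega
    · refine Mk_mul_mem_le ?_ (hθ j) (theta_list_prod_mem L); omega
    · refine Mk_mul_mem_le ?_ (hθ j) ih; omega

theorem phi_smon_sub (hx : ∀ μ, φ (xVar m n μ) = xVar m n μ)
    (hθ : ∀ j, φ (thetaVar m n j) - thetaVar m n j ∈ Mk m n 2)
    (α : Fin m →₀ ℕ) (s : Finset (Fin n)) :
    φ (smonomial m n α s) - smonomial m n α s ∈ Mk m n (s.card + 1) := by
  have hmono : φ ((MvPolynomial.monomial α (1:ℂ)) ⊗ₜ[ℂ] 1 : SuperAlg m n)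
      = (MvPolynomial.monomial α (1:ℂ)) ⊗ₜ[ℂ] 1 :=
    phi_fixes_polySub φ hx ⟨MvPolynomial.monomial α 1, rfl⟩
  have hprod := map_list_prod φ ((s.sort (· ≤ ·)).map (thetaVar m n))
  rw [List.map_map] at hprod
  have key : φ (smonomial m n α s) - smonomial m n α s
      = ((MvPolynomial.monomial α (1:ℂ)) ⊗ₜ[ℂ] 1)
        * ((((s.sort (· ≤ ·)).map ((φ : SuperAlg m n → SuperAlg m n) ∘ thetaVar m n)).prod)
            - ((s.sort (· ≤ ·)).map (thetaVar m n)).prod) := by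
    rw [smonomial, map_mul, hmono, thetaProd, hprod, mul_sub]
  rw [key]
  have hmem := phi_theta_list φ hθ (s.sort (· ≤ ·))
  rw [Finset.length_sort] at hmem
  exact mul_mem_Mk_left _ hmem

theorem phi_sub_mem (hx : ∀ μ, φ (xVar m n μ) = xVar m n μ)
    (hθ : ∀ j, φ (thetaVar m n j) - thetaVar m n j ∈ Mk m n 2)
    {k : ℕ} {g : SuperAlg m n} (hg : g ∈ Mk m n k) :
    φ g - g ∈ Mk m n (k + 1) := by
  induction hg using Submodule.span_induction with
  | mem g hgen =>
    obtain ⟨α, s, hc, rfl⟩ := hgen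
    exact Mk_antitone (by omega) (phi_smon_sub φ hx hθ α s)
  | zero => rw [map_zero, sub_zero]; exact Submodule.zero_mem _
  | add x y _ _ hxm hym =>
    have : φ (x + y) - (x + y) = (φ x - x) + (φ y - y) := by rw [map_add]; abel
    rw [this]; exact Submodule.add_mem _ hxm hym
  | smul c x _ hxm =>
    have : φ (c • x) - c • x = c • (φ x - x) := by rw [map_smul, smul_sub]
    rw [this]; exact Submodule.smul_mem _ c hxm

theorem Mk_top_bot : Mk m n (n + 1) = ⊥ := by
  rw [Mk, Submodule.span_eq_bot]
  rintro g ⟨α, s, hc, rfl⟩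
  have : s.card ≤ n := by simpa using Finset.card_le_univ s
  omega

end SuperAux

end Aux6

set_option maxHeartbeats 1000000
set_option synthInstance.maxHeartbeats 200000

/-- With all even weights equal to 1 and arbitrary positive odd weights
b₁,…,b_n, any homogeneously non-reduced family F of even, homogeneous, irreducible elements
of ℂ[x|θ] is homogeneously non-split (subvarieties of positive projective superspaces
ℙ^{m|n}_ℂ(1|b)). -/
theorem positive_projective_nonreduced_implies_homogeneously_nonsplit
    (m n r : ℕ) (b : Fin n → ℤ)
    (hb : ∀ j, 0 < b j)
    (F : Fin r → SuperAlg (m + 1) n)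
    (hev : ∀ i, IsEvenElem (m + 1) n (F i))
    (hhom : ∀ i, ∃ d : ℤ, IsHomogOfWeight (m + 1) n (fun _ => 1) b d (F i))
    (hirr : ∀ i, Irreducible (bodyMap (m + 1) n (F i)))
    (hnonred : ∃ i, F i ∉ polySub (m + 1) n) :
    ¬ ∃ φ : SuperAlg (m + 1) n ≃ₐ[ℂ] SuperAlg (m + 1) n,
      (∀ μ, φ (xVar (m + 1) n μ) - xVar (m + 1) n μ ∈ fermIdealSq (m + 1) n) ∧
      (∀ j, φ (thetaVar (m + 1) n j) - thetaVar (m + 1) n j ∈ fermIdealSq (m + 1) n) ∧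
      (∀ μ, IsHomogOfWeight (m + 1) n (fun _ => 1) b 1 (φ (xVar (m + 1) n μ))) ∧
      (∀ j, IsHomogOfWeight (m + 1) n (fun _ => 1) b (b j) (φ (thetaVar (m + 1) n j))) ∧
      (∀ i, φ (F i) ∈ polySub (m + 1) n) := by
  classical
  rintro ⟨φ, hφx2, hφθ2, hφxw, -, hφF⟩
  obtain ⟨i0, hF⟩ := hnonred
  -- φ fixes the even coordinates
  have hx : ∀ μ, φ (xVar (m+1) n μ) = xVar (m+1) n μ := by
    intro μ
    have hd2 : φ (xVar (m+1) n μ) - xVar (m+1) n μ ∈ SuperAux.Mk (m+1) n 2 :=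
      SuperAux.fermIdealSq_le_Mk2 (hφx2 μ)
    have hdw : IsHomogOfWeight (m+1) n (fun _ => 1) b 1 (φ (xVar (m+1) n μ) - xVar (m+1) n μ) :=
      Submodule.sub_mem _ (hφxw μ) (SuperAux.xVar_isHomog b μ)
    have := SuperAux.weight_one_Mk2_eq_zero b hb hdw hd2
    rwa [sub_eq_zero] at this
  have hθ : ∀ j, φ (thetaVar (m+1) n j) - thetaVar (m+1) n j ∈ SuperAux.Mk (m+1) n 2 :=
    fun j => SuperAux.fermIdealSq_le_Mk2 (hφθ2 j)
  -- the filtration P ⊔ Mk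
  set P : Submodule ℂ (SuperAlg (m+1) n) := Subalgebra.toSubmodule (polySub (m+1) n) with hP
  set N : ℕ → Submodule ℂ (SuperAlg (m+1) n) := fun k => P ⊔ SuperAux.Mk (m+1) n k with hN
  have hN1 : F i0 ∈ N 1 := by
    have h0 : F i0 ∈ SuperAux.Mk (m+1) n 0 := SuperAux.mem_Mk0 _
    refine Submodule.span_le.2 ?_ h0
    rintro g ⟨α, s, -, rfl⟩
    rcases s.eq_empty_or_nonempty with rfl | hs
    · exact Submodule.mem_sup_left (SuperAux.smon_empty_mem_polySub α)
    · exact Submodule.mem_sup_right (SuperAux.smon_mem_Mk (Finset.card_pos.2 hs))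
  have hNtop : F i0 ∉ N (n + 1) := by
    intro hmem
    obtain ⟨q, hq, G, hG, hqG⟩ := Submodule.mem_sup.1 hmem
    rw [SuperAux.Mk_top_bot, Submodule.mem_bot] at hG
    rw [hG, add_zero] at hqG
    rw [← hqG] at hF
    exact hF hq
  have hex : ∃ j, F i0 ∉ N (j + 1) := ⟨n, hNtop⟩
  set k := Nat.find hex with hk
  have hknot : F i0 ∉ N (k + 1) := Nat.find_spec hex
  have hkpos : 1 ≤ k := by
    by_contra h
    push_neg at h
    interval_cases k
    · exact hknot hN1
  have hNk : F i0 ∈ N k := by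
    have h1 : k - 1 < k := by omega
    have h2 := Nat.find_min hex h1
    push_neg at h2
    have h3 : k - 1 + 1 = k := by omega
    rwa [h3] at h2
  obtain ⟨q, hq, G, hG, hqG⟩ := Submodule.mem_sup.1 hNk
  have hφq : φ q = q := SuperAux.phi_fixes_polySub φ hx hq
  have hφFi : φ (F i0) = q + φ G := by rw [← hqG, map_add, hφq]
  have hFi : F i0 = φ (F i0) - (φ G - G) := by
    rw [hφFi, ← hqG]; abel
  have : F i0 ∈ N (k + 1) := by
    rw [hFi]
    refine Submodule.sub_mem _ (Submodule.mem_sup_left (hφF i0)) (Submodule.mem_sup_right ?_)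
    exact SuperAux.phi_sub_mem φ hx hθ hG
  exact hknot this
end
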